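/- arXiv:2604.14461 — 2 statements merged into one kernel-verified Lean document; each statement's English description precedes it below -/
import Mathlib

section
/- For any two countable linear orders A and B, rk(A + B) ≤ max(rk(A), rk(B)) + 1, where A + B is the ordered sum. -/
open Ordinal

/-- `RkGE α s` means that the rank of `s`, viewed as a linear order in its own right,
is at least `α`.  (`rk(s) ≥ β + 1` iff there is `c ∈ s` such that both
`{y ∈ s | y < c}` and `{y ∈ s | c < y}` have rank at least `β`; the clauses for `0`
and limit ordinals are folded into the single quantifier `∀ β < α`.) -/
def RkGE {Y : Type*} [LinearOrder Y] : Ordinal → Set Y → Prop :=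
  WellFounded.fix (C := fun _ => Set Y → Prop) Ordinal.lt_wf
    (fun α ih s => ∀ β, ∀ hβ : β < α,
      ∃ c ∈ s, ih β hβ {y ∈ s | y < c} ∧ ih β hβ {y ∈ s | c < y})

/-- `S` is a cut of the finite set `F`: a downward-closed (within `F`) subset of `F`.
For `F = {a_0 < … < a_{m-1}}` the cuts are exactly the `m + 1` lower segments of `F`,
and they index the `m + 1` intervals that `F` determines. -/
def IsCut {Y : Type*} [LinearOrder Y] (F S : Set Y) : Prop :=
  S ⊆ F ∧ ∀ a ∈ F, ∀ b ∈ S, a < b → a ∈ S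

/-- The interval of `Y` determined by the cut `S` of `F`: all points lying strictly above
every element of `S` and strictly below every element of `F \\ S`. -/
def cutInterval {Y : Type*} [LinearOrder Y] (F S : Set Y) : Set Y :=
  {y | (∀ a ∈ S, a < y) ∧ ∀ a ∈ F, a ∉ S → y < a}

/-- `RankGE α F` means `rk_Y(F) ≥ α` for a finite subset `F` of the linear order `Y`:
`rk_Y(F) ≥ β + 1` iff every interval determined by `F` contains a point `c` with
`rk_Y(F ∪ {c}) ≥ β` (the clauses for `0` and limits are folded into `∀ β < α`). -/
def RankGE {Y : Type*} [LinearOrder Y] : Ordinal → Set Y → Prop :=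
  WellFounded.fix (C := fun _ => Set Y → Prop) Ordinal.lt_wf
    (fun α ih F => ∀ β, ∀ hβ : β < α, ∀ S : Set Y, IsCut F S →
      ∃ c ∈ cutInterval F S, ih β hβ (insert c F))

lemma rkGE_iff {Y : Type*} [LinearOrder Y] (α : Ordinal) (s : Set Y) :
    RkGE α s ↔ ∀ β, β < α →
      ∃ c ∈ s, RkGE β {y ∈ s | y < c} ∧ RkGE β {y ∈ s | c < y} := by
  unfold RkGE
  rw [WellFounded.fix_eq]

lemma rkGE_mono {Y : Type*} [LinearOrder Y] (α : Ordinal) :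
    ∀ {s t : Set Y}, s ⊆ t → RkGE α s → RkGE α t := by
  induction α using Ordinal.induction with
  | h α ih =>
    intro s t hst h
    rw [rkGE_iff] at h ⊢
    intro β hβ
    obtain ⟨c, hc, h1, h2⟩ := h β hβ
    exact ⟨c, hst hc, ih β hβ (fun y hy => ⟨hst hy.1, hy.2⟩) h1,
      ih β hβ (fun y hy => ⟨hst hy.1, hy.2⟩) h2⟩

lemma rkGE_image_iff {X Y : Type*} [LinearOrder X] [LinearOrder Y] (f : X → Y)
    (hf : ∀ x y, f x < f y ↔ x < y) (α : Ordinal) :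
    ∀ s : Set X, RkGE α (f '' s) ↔ RkGE α s := by
  have hlt : ∀ (s : Set X) (c : X), {y ∈ f '' s | y < f c} = f '' {x ∈ s | x < c} := by
    intro s c
    ext y
    constructor
    · rintro ⟨⟨x, hx, rfl⟩, hlt⟩
      exact ⟨x, ⟨hx, (hf x c).1 hlt⟩, rfl⟩
    · rintro ⟨x, ⟨hx, hxc⟩, rfl⟩
      exact ⟨⟨x, hx, rfl⟩, (hf x c).2 hxc⟩
  have hgt : ∀ (s : Set X) (c : X), {y ∈ f '' s | f c < y} = f '' {x ∈ s | c < x} := by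
    intro s c
    ext y
    constructor
    · rintro ⟨⟨x, hx, rfl⟩, hlt⟩
      exact ⟨x, ⟨hx, (hf c x).1 hlt⟩, rfl⟩
    · rintro ⟨x, ⟨hx, hxc⟩, rfl⟩
      exact ⟨⟨x, hx, rfl⟩, (hf c x).2 hxc⟩
  induction α using Ordinal.induction with
  | h α ih =>
    intro s
    rw [rkGE_iff, rkGE_iff]
    constructor
    · intro h β hβ
      obtain ⟨c', hc', h1, h2⟩ := h β hβ
      obtain ⟨c, hc, rfl⟩ := hc'
      rw [hlt s c] at h1
      rw [hgt s c] at h2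
      exact ⟨c, hc, (ih β hβ _).1 h1, (ih β hβ _).1 h2⟩
    · intro h β hβ
      obtain ⟨c, hc, h1, h2⟩ := h β hβ
      refine ⟨f c, ⟨c, hc, rfl⟩, ?_, ?_⟩
      · rw [hlt s c]; exact (ih β hβ _).2 h1
      · rw [hgt s c]; exact (ih β hβ _).2 h2

/-- **Proposition 5.9**: for countable linear orders `A` and `B`,
`rk(A + B) ≤ max (rk A) (rk B) + 1`, where `A + B` is the ordered sum.  (Stated via the
`≥`-relation: if `rk(A + B) ≥ α + 1` then `rk A ≥ α` or `rk B ≥ α`.) -/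
theorem rank_of_ordered_sum_le {A B : Type*} [LinearOrder A] [LinearOrder B]
    [Countable A] [Countable B] (α : Ordinal)
    (h : RkGE (α + 1) (Set.univ : Set (Lex (A ⊕ B)))) :
    RkGE α (Set.univ : Set A) ∨ RkGE α (Set.univ : Set B) := by
  rw [rkGE_iff] at h
  have hα : α < α + 1 := by
    rw [Ordinal.add_one_eq_succ]; exact Order.lt_succ α
  obtain ⟨c, -, h1, h2⟩ := h α hα
  rcases hab : ofLex c with a | b
  · left
    have hc : c = toLex (Sum.inl a) := by
      rw [← hab]; rfl
    subst hc
    have hset : {y ∈ (Set.univ : Set (Lex (A ⊕ B))) | y < toLex (Sum.inl a)}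
        = (fun x : A => toLex (Sum.inl x)) '' {x | x < a} := by
      ext y
      simp only [Set.mem_setOf_eq, Set.mem_image, Set.mem_univ, true_and]
      constructor
      · intro hy
        rcases hy' : ofLex y with x | b'
        · have : y = toLex (Sum.inl x) := by rw [← hy']; rfl
          subst this
          exact ⟨x, Sum.Lex.inl_lt_inl_iff.1 hy, rfl⟩
        · have : y = toLex (Sum.inr b') := by rw [← hy']; rfl
          subst this
          exact absurd hy Sum.Lex.not_inr_lt_inl
      · rintro ⟨x, hx, rfl⟩
        exact Sum.Lex.inl_lt_inl_iff.2 hx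
    rw [hset, rkGE_image_iff _ (fun x y => Sum.Lex.inl_lt_inl_iff)] at h1
    exact rkGE_mono α (Set.subset_univ _) h1
  · right
    have hc : c = toLex (Sum.inr b) := by
      rw [← hab]; rfl
    subst hc
    have hset : {y ∈ (Set.univ : Set (Lex (A ⊕ B))) | toLex (Sum.inr b) < y}
        = (fun x : B => toLex (Sum.inr x)) '' {x | b < x} := by
      ext y
      simp only [Set.mem_setOf_eq, Set.mem_image, Set.mem_univ, true_and]
      constructor
      · intro hy
        rcases hy' : ofLex y with a' | x
        · have : y = toLex (Sum.inl a') := by rw [← hy']; rfl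
          subst this
          exact absurd hy Sum.Lex.not_inr_lt_inl
        · have : y = toLex (Sum.inr x) := by rw [← hy']; rfl
          subst this
          exact ⟨x, Sum.Lex.inr_lt_inr_iff.1 hy, rfl⟩
      · rintro ⟨x, hx, rfl⟩
        exact Sum.Lex.inr_lt_inr_iff.2 hx
    rw [hset, rkGE_image_iff _ (fun x y => Sum.Lex.inr_lt_inr_iff)] at h2
    exact rkGE_mono α (Set.subset_univ _) h2
end

section
/- For every ordinal β ≥ 1 and every finite m ≥ 1, the rank of the ordinal ω^β · m, viewed as a linear order, is rk(ω^β · m) = ω·β + ⌊log₂ m⌋. -/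
open Ordinal

theorem RkGE_iff {Y : Type*} [LinearOrder Y] (α : Ordinal) (s : Set Y) :
    RkGE α s ↔ ∀ β < α, ∃ c ∈ s, RkGE β {y ∈ s | y < c} ∧ RkGE β {y ∈ s | c < y} := by
  rw [RkGE, WellFounded.fix_eq]

theorem RkGE_zero {Y : Type*} [LinearOrder Y] (s : Set Y) : RkGE 0 s := by
  rw [RkGE_iff]; intro β hβ; exact absurd hβ not_lt_zero

theorem RkGE_mono_set {Y : Type*} [LinearOrder Y] {α : Ordinal} {s t : Set Y}
    (hst : s ⊆ t) (h : RkGE α s) : RkGE α t := by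
  induction α using Ordinal.induction generalizing s t with
  | h α ih =>
    rw [RkGE_iff] at h ⊢
    intro β hβ
    obtain ⟨c, hc, h1, h2⟩ := h β hβ
    exact ⟨c, hst hc, ih β hβ (fun y hy => ⟨hst hy.1, hy.2⟩) h1,
      ih β hβ (fun y hy => ⟨hst hy.1, hy.2⟩) h2⟩

theorem RkGE_mono_ord {Y : Type*} [LinearOrder Y] {α β : Ordinal} {s : Set Y}
    (hba : β ≤ α) (h : RkGE α s) : RkGE β s := by
  rw [RkGE_iff] at h ⊢
  intro γ hγ
  exact h γ (lt_of_lt_of_le hγ hba)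

theorem RkGE_image {X Y : Type*} [LinearOrder X] [LinearOrder Y] (f : X ↪o Y)
    {α : Ordinal} {s : Set X} : RkGE α (f '' s) ↔ RkGE α s := by
  induction α using Ordinal.induction generalizing s with
  | h α ih =>
    rw [RkGE_iff, RkGE_iff]
    constructor
    · rintro h β hβ
      obtain ⟨c, ⟨c', hc', rfl⟩, h1, h2⟩ := h β hβ
      refine ⟨c', hc', ?_, ?_⟩
      · rw [← ih β hβ]
        convert h1 using 1
        ext y; constructor
        · rintro ⟨y', ⟨hy', hlt⟩, rfl⟩; exact ⟨⟨y', hy', rfl⟩, f.strictMono hlt⟩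
        · rintro ⟨⟨y', hy', rfl⟩, hlt⟩; exact ⟨y', ⟨hy', f.lt_iff_lt.mp hlt⟩, rfl⟩
      · rw [← ih β hβ]
        convert h2 using 1
        ext y; constructor
        · rintro ⟨y', ⟨hy', hlt⟩, rfl⟩; exact ⟨⟨y', hy', rfl⟩, f.strictMono hlt⟩
        · rintro ⟨⟨y', hy', rfl⟩, hlt⟩; exact ⟨y', ⟨hy', f.lt_iff_lt.mp hlt⟩, rfl⟩
    · rintro h β hβ
      obtain ⟨c, hc, h1, h2⟩ := h β hβ
      refine ⟨f c, ⟨c, hc, rfl⟩, ?_, ?_⟩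
      · have : {y ∈ f '' s | y < f c} = f '' {y ∈ s | y < c} := by
          ext y; constructor
          · rintro ⟨⟨y', hy', rfl⟩, hlt⟩; exact ⟨y', ⟨hy', f.lt_iff_lt.mp hlt⟩, rfl⟩
          · rintro ⟨y', ⟨hy', hlt⟩, rfl⟩; exact ⟨⟨y', hy', rfl⟩, f.strictMono hlt⟩
        rw [this, ih β hβ]; exact h1
      · have : {y ∈ f '' s | f c < y} = f '' {y ∈ s | c < y} := by
          ext y; constructor
          · rintro ⟨⟨y', hy', rfl⟩, hlt⟩; exact ⟨y', ⟨hy', f.lt_iff_lt.mp hlt⟩, rfl⟩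
          · rintro ⟨y', ⟨hy', hlt⟩, rfl⟩; exact ⟨⟨y', hy', rfl⟩, f.strictMono hlt⟩
        rw [this, ih β hβ]; exact h2

theorem sep_lt_eq {a b c : Ordinal} (hc : c ∈ Set.Ico a b) :
    {y ∈ Set.Ico a b | y < c} = Set.Ico a c := by
  ext y
  constructor
  · rintro ⟨⟨h1, _⟩, h3⟩; exact ⟨h1, h3⟩
  · rintro ⟨h1, h2⟩; exact ⟨⟨h1, h2.trans hc.2⟩, h2⟩

theorem sep_gt_eq {a b c : Ordinal} (hc : c ∈ Set.Ico a b) :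
    {y ∈ Set.Ico a b | c < y} = Set.Ico (c + 1) b := by
  ext y
  constructor
  · rintro ⟨⟨_, h2⟩, h3⟩; exact ⟨Order.add_one_le_iff.mpr h3, h2⟩
  · rintro ⟨h1, h2⟩
    have hcy : c < y := Order.add_one_le_iff.mp h1
    exact ⟨⟨hc.1.trans hcy.le, h2⟩, hcy⟩

/-- Lower bound, finite case: an interval with `n` points has rank ≥ `k` when `2^k ≤ n+1`. -/
theorem rk_lower_fin : ∀ k n : ℕ, ∀ a : Ordinal, 2 ^ k ≤ n + 1 →
    RkGE (k : Ordinal) (Set.Ico a (a + n)) := by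
  intro k
  induction k with
  | zero => intro n a _; exact_mod_cast RkGE_zero _
  | succ k ih =>
    intro n a hn
    rw [RkGE_iff]
    intro γ hγ
    have hγk : γ ≤ (k : Ordinal) := by
      have : (((k : ℕ) + 1 : ℕ) : Ordinal) = (k : Ordinal) + 1 := by push_cast; rfl
      rw [this] at hγ
      exact Order.lt_add_one_iff.mp hγ
    set j : ℕ := 2 ^ k - 1 with hj
    have hjn : j < n := by
      have h1 : 1 ≤ 2 ^ k := Nat.one_le_two_pow
      have h2 : 2 ^ (k + 1) = 2 ^ k * 2 := pow_succ 2 k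
      omega
    have hcmem : (a + j) ∈ Set.Ico a (a + (n : Ordinal)) := by
      constructor
      · exact le_self_add
      · exact add_lt_add_right (by exact_mod_cast hjn) a
    refine ⟨a + j, hcmem, ?_, ?_⟩
    · rw [sep_lt_eq hcmem]
      exact RkGE_mono_ord hγk (ih j a (by omega))
    · rw [sep_gt_eq hcmem]
      have he : a + (j : Ordinal) + 1 = a + ((j + 1 : ℕ) : Ordinal) := by
        push_cast; rw [add_assoc]
      have he2 : a + (n : Ordinal) = a + ((j + 1 : ℕ) : Ordinal) + ((n - j - 1 : ℕ) : Ordinal) := by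
        rw [add_assoc, ← Nat.cast_add]
        congr 1
        exact_mod_cast (by omega : n = j + 1 + (n - j - 1))
      rw [he, he2]
      exact RkGE_mono_ord hγk (ih (n - j - 1) _ (by omega))

/-- Upper bound, finite case: an interval with at most `n` points has rank < `k`
when `n + 1 < 2^k`. -/
theorem rk_upper_fin : ∀ k n : ℕ, ∀ a b : Ordinal, b ≤ a + n → n + 1 < 2 ^ k →
    ¬ RkGE (k : Ordinal) (Set.Ico a b) := by
  intro k
  induction k with
  | zero => intro n a b _ h; omega
  | succ k ih =>
    intro n a b hb hn h
    rw [RkGE_iff] at h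
    have hk : (k : Ordinal) < ((k + 1 : ℕ) : Ordinal) := by exact_mod_cast Nat.lt_succ_self k
    obtain ⟨c, hc, hL, hR⟩ := h k hk
    rw [sep_lt_eq hc] at hL
    rw [sep_gt_eq hc] at hR
    have hac : a ≤ c := hc.1
    have hcb : c < b := hc.2
    have hcan : c < a + n := lt_of_lt_of_le hcb hb
    obtain ⟨j, hjeq⟩ : ∃ j : ℕ, c - a = j := by
      refine lt_omega0.mp (lt_of_le_of_lt ?_ (nat_lt_omega0 n))
      exact Ordinal.sub_le.mpr hcan.le
    have hceq : c = a + j := by rw [← hjeq, Ordinal.add_sub_cancel_of_le hac]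
    have hjn : j < n := by
      have : a + (j : Ordinal) < a + n := hceq ▸ hcan
      exact_mod_cast lt_of_add_lt_add_left this
    have hsplit : j + 1 < 2 ^ k ∨ (n - j - 1) + 1 < 2 ^ k := by
      have h2 : 2 ^ (k + 1) = 2 ^ k * 2 := pow_succ 2 k
      omega
    rcases hsplit with hs | hs
    · exact ih j a c (le_of_eq hceq) hs hL
    · refine ih (n - j - 1) (c + 1) b ?_ hs hR
      have : a + (n : Ordinal) = c + 1 + ((n - j - 1 : ℕ) : Ordinal) := by
        rw [hceq, add_assoc, add_assoc, ← Nat.cast_one, ← Nat.cast_add, ← Nat.cast_add]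
        congr 2
        omega
      exact this ▸ hb

theorem omega_le_opow {β : Ordinal} (hβ : 1 ≤ β) : ω ≤ ω ^ β := by
  calc ω = ω ^ (1 : Ordinal) := (opow_one ω).symm
  _ ≤ ω ^ β := opow_le_opow_right omega0_pos hβ

theorem opow_le_mul {β : Ordinal} {m : ℕ} (hm : 1 ≤ m) : ω ^ β ≤ ω ^ β * m := by
  conv_lhs => rw [← mul_one (ω ^ β)]
  exact mul_le_mul_right (by exact_mod_cast hm) _

theorem absorb {β δ : Ordinal} {m : ℕ} (hδ : δ < ω ^ β) (hm : 1 ≤ m) :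
    δ + ω ^ β * m = ω ^ β * m :=
  Ordinal.add_absorp hδ (opow_le_mul hm)

theorem add_one_absorb {β : Ordinal} (c : Ordinal) {m : ℕ} (hβ : 1 ≤ β) (hm : 1 ≤ m) :
    (c + 1) + ω ^ β * m = c + ω ^ β * m := by
  rw [add_assoc]
  congr 1
  exact absorb (lt_of_lt_of_le one_lt_omega0 (omega_le_opow hβ)) hm

theorem opow_mul_nat_lt {q β : Ordinal} (hq : q < β) (n : ℕ) :
    ω ^ q * (n : Ordinal) + 1 < ω ^ β := by
  have h1 : ω ^ q * (n : Ordinal) + 1 ≤ ω ^ q * n + ω ^ q :=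
    add_le_add_right (Order.one_le_iff_pos.mpr (opow_pos q omega0_pos)) _
  have h2 : ω ^ q * (n : Ordinal) + ω ^ q = ω ^ q * ((n : Ordinal) + 1) := by
    rw [mul_add, mul_one]
  have h3 : ω ^ q * ((n : Ordinal) + 1) < ω ^ q * ω := by
    refine (mul_lt_mul_iff_right₀ (opow_pos q omega0_pos)).mpr ?_
    exact_mod_cast nat_lt_omega0 (n + 1)
  have h4 : ω ^ q * ω = ω ^ (q + 1) := by
    rw [opow_add, opow_one]
  have h5 : ω ^ (q + 1) ≤ ω ^ β :=
    opow_le_opow_right omega0_pos (Order.add_one_le_iff.mpr hq)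
  calc ω ^ q * (n : Ordinal) + 1 ≤ ω ^ q * ((n : Ordinal) + 1) := h2 ▸ h1
  _ < ω ^ q * ω := h3
  _ = ω ^ (q + 1) := h4
  _ ≤ ω ^ β := h5

/-- Lower bound: `rk(ω^β·m) ≥ ω·β + log₂ m`, interval form. -/
theorem rk_lower (α : Ordinal) : ∀ β : Ordinal, ∀ m : ℕ, ∀ a : Ordinal, 1 ≤ β → 1 ≤ m →
    α ≤ ω * β + (Nat.log 2 m : Ordinal) → RkGE α (Set.Ico a (a + ω ^ β * m)) := by
  induction α using Ordinal.induction with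
  | h α IH =>
    intro β m a hβ hm hα
    rw [RkGE_iff]
    intro α' hα'
    have hω : ω ≤ ω ^ β := omega_le_opow hβ
    have hαbd : α' < ω * β + (Nat.log 2 m : Ordinal) := lt_of_lt_of_le hα' hα
    by_cases hcase : α' < ω * β
    · -- α' below ω·β
      have hq : α' / ω < β := (Ordinal.div_lt omega0_ne_zero).mpr hcase
      obtain ⟨n, hn⟩ := lt_omega0.mp (Ordinal.mod_lt α' omega0_ne_zero)
      have hdm : ω * (α' / ω) + (n : Ordinal) = α' := by
        rw [← hn]; exact Ordinal.div_add_mod α' ω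
      by_cases hq0 : α' / ω = 0
      · -- α' is finite, equal to n
        have hα'n : α' = (n : Ordinal) := by rw [← hdm, hq0, mul_zero, zero_add]
        set j : ℕ := 2 ^ n - 1 with hj
        have hjlt : (j : Ordinal) < ω ^ β * m :=
          lt_of_lt_of_le (lt_of_lt_of_le (nat_lt_omega0 j) hω) (opow_le_mul hm)
        have hcmem : a + (j : Ordinal) ∈ Set.Ico a (a + ω ^ β * m) :=
          ⟨le_self_add, add_lt_add_right hjlt a⟩
        refine ⟨a + (j : Ordinal), hcmem, ?_, ?_⟩
        · rw [sep_lt_eq hcmem, hα'n]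
          exact rk_lower_fin n j a (by have := Nat.one_le_two_pow (n := n); omega)
        · rw [sep_gt_eq hcmem]
          have heq : a + ω ^ β * m = (a + (j : Ordinal) + 1) + ω ^ β * m := by
            rw [add_assoc a, add_assoc a]
            congr 1
            have : (j : Ordinal) + 1 < ω ^ β :=
              lt_of_lt_of_le (by exact_mod_cast nat_lt_omega0 (j + 1)) hω
            rw [absorb this hm]
          rw [heq]
          exact IH α' hα' β m _ hβ hm hαbd.le
      · -- ω ≤ α' < ω·β
        have hq1 : 1 ≤ α' / ω := Ordinal.one_le_iff_ne_zero.mpr hq0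
        have hlt : ω ^ (α' / ω) * ((2 ^ n : ℕ) : Ordinal) < ω ^ β * m := by
          have h := opow_mul_nat_lt hq (2 ^ n)
          exact lt_of_le_of_lt (le_self_add) (lt_of_lt_of_le h (opow_le_mul hm))
        have hcmem : a + ω ^ (α' / ω) * ((2 ^ n : ℕ) : Ordinal) ∈ Set.Ico a (a + ω ^ β * m) :=
          ⟨le_self_add, add_lt_add_right hlt a⟩
        refine ⟨_, hcmem, ?_, ?_⟩
        · rw [sep_lt_eq hcmem]
          refine IH α' hα' (α' / ω) (2 ^ n) a hq1 Nat.one_le_two_pow ?_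
          rw [Nat.log_pow (by norm_num)]
          exact le_of_eq hdm.symm
        · rw [sep_gt_eq hcmem]
          have heq : a + ω ^ β * m = (a + ω ^ (α' / ω) * ((2 ^ n : ℕ) : Ordinal) + 1) + ω ^ β * m := by
            rw [add_assoc a, add_assoc a]
            congr 1
            rw [absorb (opow_mul_nat_lt hq (2 ^ n)) hm]
          rw [heq]
          exact IH α' hα' β m _ hβ hm hαbd.le
    · -- α' = ω·β + k with k < log₂ m
      push_neg at hcase
      have hbk : ω * β + (α' - ω * β) = α' := Ordinal.add_sub_cancel_of_le hcase
      have hklt : α' - ω * β < (Nat.log 2 m : Ordinal) := by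
        have := hbk.symm ▸ hαbd
        exact lt_of_add_lt_add_left this
      obtain ⟨kn, hkn⟩ := lt_omega0.mp (lt_trans hklt (nat_lt_omega0 _))
      have hknlt : kn < Nat.log 2 m := by rw [hkn] at hklt; exact_mod_cast hklt
      have hm2 : 2 ≤ m := by
        by_contra h
        have hme : m = 1 := by omega
        rw [hme] at hknlt
        simp [Nat.log_one_right] at hknlt
      have hm1 : 1 ≤ m / 2 := by omega
      have hm1m : m / 2 < m := by omega
      have hmsum : m / 2 + (m - m / 2) = m := by omega
      have hm2' : 1 ≤ m - m / 2 := by omega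
      have hlog1 : kn ≤ Nat.log 2 (m / 2) := by
        have h := Nat.log_div_base 2 m
        omega
      have hlog2 : kn ≤ Nat.log 2 (m - m / 2) :=
        le_trans hlog1 (Nat.log_mono_right (by omega))
      have hcmem : a + ω ^ β * ((m / 2 : ℕ) : Ordinal) ∈ Set.Ico a (a + ω ^ β * m) := by
        refine ⟨le_self_add, add_lt_add_right ?_ a⟩
        exact (mul_lt_mul_iff_right₀ (opow_pos β omega0_pos)).mpr (by exact_mod_cast hm1m)
      refine ⟨_, hcmem, ?_, ?_⟩
      · rw [sep_lt_eq hcmem]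
        refine IH α' hα' β (m / 2) a hβ hm1 ?_
        rw [← hbk, hkn]
        exact add_le_add_right (by exact_mod_cast hlog1) _
      · rw [sep_gt_eq hcmem]
        have heq : a + ω ^ β * m =
            (a + ω ^ β * ((m / 2 : ℕ) : Ordinal) + 1) + ω ^ β * ((m - m / 2 : ℕ) : Ordinal) := by
          rw [add_one_absorb _ hβ hm2', add_assoc, ← mul_add, ← Nat.cast_add, hmsum]
        rw [heq]
        refine IH α' hα' β (m - m / 2) _ hβ hm2' ?_
        rw [← hbk, hkn]
        exact add_le_add_right (by exact_mod_cast hlog2) _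

/-- The inductive hypothesis used in the upper-bound proof. -/
def UpperStmt (α : Ordinal) : Prop :=
  ∀ β : Ordinal, ∀ m : ℕ, ∀ a b : Ordinal, 1 ≤ β → 1 ≤ m →
    b < a + ω ^ β * ((m : Ordinal) + 1) → ω * β + (Nat.log 2 m : Ordinal) + 1 ≤ α →
    ¬ RkGE α (Set.Ico a b)

/-- If an interval has order type `< ω^β`, it cannot have rank `≥ ω·β`
(given the inductive hypothesis below `α'`). -/
theorem rk_upper_small {α' β γ : Ordinal} (hβ : 1 ≤ β) (hγ : γ < ω ^ β) (hα' : ω * β ≤ α')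
    (IH : ∀ α₂ ≤ α', UpperStmt α₂)
    {a b : Ordinal} (hb : b ≤ a + γ) (h : RkGE α' (Set.Ico a b)) : False := by
  have hωβ : ω ≤ ω * β := by
    conv_lhs => rw [← mul_one ω]
    exact mul_le_mul_right hβ ω
  by_cases hfin : γ < ω
  · obtain ⟨n, rfl⟩ := lt_omega0.mp hfin
    refine rk_upper_fin (n + 1) n a b hb (Nat.lt_two_pow_self) (RkGE_mono_ord ?_ h)
    calc ((n + 1 : ℕ) : Ordinal) ≤ ω := (nat_lt_omega0 (n + 1)).le
    _ ≤ ω * β := hωβ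
    _ ≤ α' := hα'
  · push_neg at hfin
    have hγ0 : γ ≠ 0 := by
      intro h0; rw [h0] at hfin; exact (omega0_pos.not_ge) hfin
    set β₁ := log ω γ with hβ₁def
    have hβ₁ : 1 ≤ β₁ := by
      refine (opow_le_iff_le_log one_lt_omega0 hγ0).mp ?_
      rwa [opow_one]
    have hβ₁β : β₁ < β := (lt_opow_iff_log_lt one_lt_omega0 hγ0).mp hγ
    have hne : (ω ^ β₁ : Ordinal) ≠ 0 := (opow_pos β₁ omega0_pos).ne'
    obtain ⟨k₁, hk₁⟩ : ∃ k₁ : ℕ, γ / ω ^ β₁ = k₁ := by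
      refine lt_omega0.mp ((Ordinal.div_lt hne).mpr ?_)
      have he : ω ^ β₁ * ω = ω ^ (β₁ + 1) := by rw [opow_add, opow_one]
      rw [he, Ordinal.add_one_eq_succ]
      exact lt_opow_succ_log_self one_lt_omega0 γ
    have hk₁1 : 1 ≤ k₁ := by
      have : (1 : Ordinal) ≤ γ / ω ^ β₁ :=
        (Ordinal.le_div hne).mpr (by rw [mul_one]; exact opow_log_le_self ω hγ0)
      rw [hk₁] at this
      exact_mod_cast this
    have hγlt : γ < ω ^ β₁ * ((k₁ : Ordinal) + 1) := by
      have := lt_mul_succ_div γ hne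
      rwa [hk₁, ← Ordinal.add_one_eq_succ] at this
    have hbd : ω * β₁ + (Nat.log 2 k₁ : Ordinal) + 1 ≤ α' := by
      refine le_trans (le_of_lt ?_) hα'
      have h1 : (Nat.log 2 k₁ : Ordinal) + 1 < ω := by
        exact_mod_cast nat_lt_omega0 (Nat.log 2 k₁ + 1)
      calc ω * β₁ + (Nat.log 2 k₁ : Ordinal) + 1 = ω * β₁ + ((Nat.log 2 k₁ : Ordinal) + 1) := by
            rw [add_assoc]
      _ < ω * β₁ + ω := add_lt_add_right h1 _
      _ = ω * (β₁ + 1) := (mul_add_one ω β₁).symm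
      _ ≤ ω * β := mul_le_mul_right (Order.add_one_le_iff.mpr hβ₁β) ω
    exact IH α' le_rfl β₁ k₁ a b hβ₁ hk₁1
      (lt_of_le_of_lt hb (add_lt_add_right hγlt a)) hbd h

/-- Upper bound: an interval of order type `< ω^β·(m+1)` has rank `< ω·β + log₂ m + 1`. -/
theorem rk_upper (α : Ordinal) : UpperStmt α := by
  induction α using Ordinal.induction with
  | h α IH =>
    intro β m a b hβ hm hb hbd h
    set α' := ω * β + (Nat.log 2 m : Ordinal) with hα'def
    have hα'α : α' < α := lt_of_lt_of_le (lt_add_one α') hbd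
    have hωβα' : ω * β ≤ α' := by rw [hα'def]; exact le_self_add
    have IH' : ∀ α₂ ≤ α', UpperStmt α₂ := fun α₂ hle => IH α₂ (lt_of_le_of_lt hle hα'α)
    rw [RkGE_iff] at h
    obtain ⟨c, hc, hL, hR⟩ := h α' hα'α
    rw [sep_lt_eq hc] at hL
    rw [sep_gt_eq hc] at hR
    have hac : a ≤ c := hc.1
    set γ₁ := c - a with hγ₁def
    have hcγ : c = a + γ₁ := (Ordinal.add_sub_cancel_of_le hac).symm
    have hγ₁lt : γ₁ < ω ^ β * ((m : Ordinal) + 1) := by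
      have : a + γ₁ < a + ω ^ β * ((m : Ordinal) + 1) := hcγ ▸ lt_trans hc.2 hb
      exact lt_of_add_lt_add_left this
    have hne : (ω ^ β : Ordinal) ≠ 0 := (opow_pos β omega0_pos).ne'
    obtain ⟨kn, hkn⟩ : ∃ kn : ℕ, γ₁ / ω ^ β = kn := by
      refine lt_omega0.mp (lt_trans ((Ordinal.div_lt hne).mpr hγ₁lt) ?_)
      exact_mod_cast nat_lt_omega0 (m + 1)
    have hknm : kn ≤ m := by
      have : γ₁ / ω ^ β < (m : Ordinal) + 1 := (Ordinal.div_lt hne).mpr hγ₁lt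
      rw [hkn] at this
      exact_mod_cast Order.lt_add_one_iff.mp this
    rcases Nat.eq_zero_or_pos kn with hkn0 | hkn1
    · -- left side is short
      have hsm : γ₁ < ω ^ β := by
        have : γ₁ / ω ^ β < 1 := by rw [hkn, hkn0]; exact_mod_cast zero_lt_one
        have := (Ordinal.div_lt hne).mp this
        rwa [mul_one] at this
      exact rk_upper_small hβ hsm hωβα' IH' (le_of_eq hcγ) hL
    · have hlow : a + ω ^ β * (kn : Ordinal) ≤ c := by
        rw [hcγ]
        refine add_le_add_right ?_ a
        rw [← hkn]
        exact mul_div_le γ₁ (ω ^ β)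
    -- b < (c+1) + ω^β·(m-kn+1)
      have hbr : b < c + 1 + ω ^ β * (((m - kn : ℕ) : Ordinal) + 1) := by
        have h1 : (m : Ordinal) + 1 = (kn : Ordinal) + (((m - kn : ℕ) : Ordinal) + 1) := by
          have hh : kn + (m - kn) = m := by omega
          rw [← add_assoc, ← Nat.cast_add, hh]
        have h2 : a + ω ^ β * ((m : Ordinal) + 1)
            = (a + ω ^ β * kn) + ω ^ β * (((m - kn : ℕ) : Ordinal) + 1) := by
          rw [h1, mul_add, ← add_assoc]
        have h3 : c + 1 + ω ^ β * (((m - kn : ℕ) : Ordinal) + 1)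
            = c + ω ^ β * (((m - kn : ℕ) : Ordinal) + 1) := by
          have : ((m - kn : ℕ) : Ordinal) + 1 = (((m - kn + 1 : ℕ)) : Ordinal) := by push_cast; rfl
          rw [this]
          exact add_one_absorb c hβ (by omega)
        rw [h3]
        calc b < a + ω ^ β * ((m : Ordinal) + 1) := hb
        _ = (a + ω ^ β * kn) + ω ^ β * (((m - kn : ℕ) : Ordinal) + 1) := h2
        _ ≤ c + ω ^ β * (((m - kn : ℕ) : Ordinal) + 1) := add_le_add_left hlow _
      rcases eq_or_lt_of_le hknm with hkeq | hklt
      · -- kn = m : right side is short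
        have hbr' : b ≤ (c + 1) + (b - (c + 1)) := Ordinal.le_add_sub b (c + 1)
        have hγ₂ : b - (c + 1) < ω ^ β := by
          by_contra hcon
          push_neg at hcon
          rcases le_or_gt (c + 1) b with hle | hlt
          · have : c + 1 + ω ^ β ≤ c + 1 + (b - (c + 1)) := add_le_add_right hcon _
            rw [Ordinal.add_sub_cancel_of_le hle] at this
            have hbig : b < c + 1 + ω ^ β := by
              have := hbr
              rw [hkeq] at this
              simpa using lt_of_lt_of_le this (add_le_add_right (by
                rw [Nat.sub_self]
                simp) _)
            exact absurd (lt_of_lt_of_le hbig this) (lt_irrefl b)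
          · rw [Ordinal.sub_eq_zero_iff_le.mpr hlt.le] at hcon
            exact (opow_pos β omega0_pos).not_ge hcon
        exact rk_upper_small hβ hγ₂ hωβα' IH' hbr' hR
      · -- 1 ≤ kn < m : recurse into the shorter half
        have hγ₁lt2 : γ₁ < ω ^ β * ((kn : Ordinal) + 1) := by
          have := lt_mul_succ_div γ₁ hne
          rwa [hkn, ← Ordinal.add_one_eq_succ] at this
        by_cases hcmp : Nat.log 2 kn < Nat.log 2 m
        · have hlev : ω * β + (Nat.log 2 kn : Ordinal) + 1 ≤ α' := by
            rw [hα'def, add_assoc]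
            refine add_le_add_right ?_ _
            exact_mod_cast hcmp
          refine IH _ (lt_of_le_of_lt hlev hα'α) β kn a c hβ hkn1 ?_ le_rfl
            (RkGE_mono_ord hlev hL)
          rw [hcγ]
          exact add_lt_add_right hγ₁lt2 a
        · have hcmp2 : Nat.log 2 (m - kn) < Nat.log 2 m := by
            push_neg at hcmp
            by_contra hcon
            push_neg at hcon
            have e1 : 2 ^ Nat.log 2 m ≤ 2 ^ Nat.log 2 kn := Nat.pow_le_pow_right (by norm_num) hcmp
            have e2 : 2 ^ Nat.log 2 kn ≤ kn := Nat.pow_log_le_self 2 (by omega)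
            have e3 : 2 ^ Nat.log 2 m ≤ 2 ^ Nat.log 2 (m - kn) := Nat.pow_le_pow_right (by norm_num) hcon
            have e4 : 2 ^ Nat.log 2 (m - kn) ≤ m - kn := Nat.pow_log_le_self 2 (by omega)
            have e5 : m < 2 ^ (Nat.log 2 m + 1) := Nat.lt_pow_succ_log_self (by norm_num) m
            have e6 : 2 ^ (Nat.log 2 m + 1) = 2 ^ Nat.log 2 m * 2 := pow_succ 2 _
            omega
          have hlev : ω * β + (Nat.log 2 (m - kn) : Ordinal) + 1 ≤ α' := by
            rw [hα'def, add_assoc]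
            refine add_le_add_right ?_ _
            exact_mod_cast hcmp2
          exact IH _ (lt_of_le_of_lt hlev hα'α) β (m - kn) (c + 1) b hβ (by omega) hbr le_rfl
            (RkGE_mono_ord hlev hR)

theorem RkGE_univ_congr {X Y : Type*} [LinearOrder X] [LinearOrder Y] (e : X ≃o Y)
    (α : Ordinal) : RkGE α (Set.univ : Set X) ↔ RkGE α (Set.univ : Set Y) := by
  have h : (e.toOrderEmbedding : X → Y) '' Set.univ = Set.univ := by
    rw [Set.image_univ]
    exact e.surjective.range_eq
  rw [← RkGE_image e.toOrderEmbedding (α := α) (s := Set.univ), h]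

theorem RkGE_univ_Iio (o α : Ordinal) :
    RkGE α (Set.univ : Set (Set.Iio o)) ↔ RkGE α (Set.Ico 0 o) := by
  have h : (OrderEmbedding.subtype (· ∈ Set.Iio o) : Set.Iio o → Ordinal) '' Set.univ
      = Set.Ico 0 o := by
    rw [Set.image_univ]
    have : Set.range (OrderEmbedding.subtype (· ∈ Set.Iio o) : Set.Iio o → Ordinal)
        = Set.Iio o := Subtype.range_coe
    rw [this]
    ext y
    simp [zero_le]
  rw [← RkGE_image (OrderEmbedding.subtype (· ∈ Set.Iio o)) (α := α) (s := Set.univ), h]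

/-- **Theorem 5.14**: for every countable ordinal `β ≥ 1` and every finite `m ≥ 1`,
`rk(ω^β · m) = ω·β + ⌊log₂ m⌋`. -/
theorem rank_omega_pow_mul {β : Ordinal} (hβ : 1 ≤ β) (hcnt : β.card ≤ Cardinal.aleph0)
    {m : ℕ} (hm : 1 ≤ m) :
    RkGE (ω * β + Nat.log 2 m) (Set.univ : Set (ω ^ β * m : Ordinal).ToType) ∧
    ¬ RkGE (ω * β + Nat.log 2 m + 1) (Set.univ : Set (ω ^ β * m : Ordinal).ToType) := by
  have key : ∀ α : Ordinal, RkGE α (Set.univ : Set (ω ^ β * m : Ordinal).ToType) ↔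
      RkGE α (Set.Ico 0 (ω ^ β * (m : Ordinal))) := by
    intro α
    rw [← RkGE_univ_congr ((Ordinal.ToType.mk (o := ω ^ β * m))) α, RkGE_univ_Iio]
  constructor
  · rw [key]
    have := rk_lower (ω * β + (Nat.log 2 m : Ordinal)) β m 0 hβ hm le_rfl
    rwa [zero_add] at this
  · rw [key]
    refine rk_upper _ β m 0 _ hβ hm ?_ le_rfl
    rw [zero_add]
    refine (mul_lt_mul_iff_right₀ (opow_pos β omega0_pos)).mpr ?_
    exact lt_add_one _
end
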